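/- arXiv:2410.09446 — 3 statements merged into one kernel-verified Lean document; each statement's English description precedes it below -/
import Mathlib

section
/- Let T and S be bounded, linear, positive operators on L²(G, ℂ^{s×r}), each adjointable with respect to the matrix-valued inner product, such that T S = S T, and let {E_k}_{k∈ℕ} be a matrix-valued orthonormal basis for L²(G, ℂ^{s×r}). Then {(I + T S) E_k}_{k∈ℕ} is a matrix-valued Riesz basis for L²(G, ℂ^{s×r}), where I denotes the identity operator. -/
open MeasureTheory Filter
open scoped ENNReal ComplexOrder

noncomputable section

/-- The space `L²(G, ℂ^{s×r})` of square-integrable `ℂ^{s×r}`-valued functions on `G`,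
realized as an `Lp`-space with values in `EuclideanSpace ℂ (Fin s × Fin r)`
(so that the norm is the Frobenius norm). -/
abbrev MatL2 {G : Type*} [MeasurableSpace G] (μ : Measure G) (s r : ℕ) : Type _ :=
  Lp (α := G) (EuclideanSpace ℂ (Fin s × Fin r)) 2 μ

/-- The matrix-valued inner product `⟨f, g⟩ = ∫_G f(x) g(x)* dμ(x)`, an `s × s` matrix. -/
def matInner {G : Type*} [MeasurableSpace G] {μ : Measure G} {s r : ℕ}
    (f g : MatL2 μ s r) : Matrix (Fin s) (Fin s) ℂ :=
  Matrix.of fun i j => ∫ x, ∑ n : Fin r, f x (i, n) * (starRingEnd ℂ) (g x (j, n)) ∂μ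

/-- Left multiplication by the matrix `A : ℂ^{s×s}` as a continuous linear map on
`ℂ^{s×r} ≅ EuclideanSpace ℂ (Fin s × Fin r)`; it is given by the matrix `A ⊗ I`. -/
def matMulCLM (s r : ℕ) (A : Matrix (Fin s) (Fin s) ℂ) :
    EuclideanSpace ℂ (Fin s × Fin r) →L[ℂ] EuclideanSpace ℂ (Fin s × Fin r) :=
  LinearMap.toContinuousLinearMap
    (Matrix.toEuclideanLin (Matrix.of fun p q : Fin s × Fin r =>
      if p.2 = q.2 then A p.1 q.1 else 0))

/-- The action of a matrix `A : ℂ^{s×s}` on `h ∈ L²(G, ℂ^{s×r})` by pointwise left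
multiplication, `(A h)(x) = A · h(x)`. -/
def matSMul {G : Type*} [MeasurableSpace G] {μ : Measure G} {s r : ℕ}
    (A : Matrix (Fin s) (Fin s) ℂ) (f : MatL2 μ s r) : MatL2 μ s r :=
  (matMulCLM s r A).compLp f

/-- A bounded linear operator `U` on `L²(G, ℂ^{s×r})` is adjointable with respect to the
matrix-valued inner product if `⟨U f, g⟩ = ⟨f, U* g⟩` (as `s × s` matrices) for all `f, g`,
where `U*` is the Hilbert adjoint of `U`. -/
def MatAdjointable {G : Type*} [MeasurableSpace G] {μ : Measure G} {s r : ℕ}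
    (U : MatL2 μ s r →L[ℂ] MatL2 μ s r) : Prop :=
  ∀ f g : MatL2 μ s r,
    matInner (U f) g = matInner f (ContinuousLinearMap.adjoint U g)

/-- A matrix-valued orthonormal basis of `L²(G, ℂ^{s×r})`: `⟨E k, E j⟩ = δ_{kj} I` and
every `f` has the expansion `f = ∑_k ⟨f, E k⟩ E k`, the series converging in norm. -/
def IsMatONB {G : Type*} [MeasurableSpace G] {μ : Measure G} {s r : ℕ}
    (E : ℕ → MatL2 μ s r) : Prop :=
  (∀ k j : ℕ, matInner (E k) (E j) =
      if k = j then (1 : Matrix (Fin s) (Fin s) ℂ) else (0 : Matrix (Fin s) (Fin s) ℂ)) ∧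
  (∀ f : MatL2 μ s r,
    Tendsto (fun N : ℕ => ∑ k ∈ Finset.range N, matSMul (matInner f (E k)) (E k))
      atTop (nhds f))

/-- A matrix-valued Riesz basis of `L²(G, ℂ^{s×r})`: the image of a matrix-valued
orthonormal basis under a bounded, linear, bijective operator that is adjointable with
respect to the matrix-valued inner product. -/
def IsMatRieszBasis {G : Type*} [MeasurableSpace G] {μ : Measure G} {s r : ℕ}
    (F : ℕ → MatL2 μ s r) : Prop :=
  ∃ (E : ℕ → MatL2 μ s r) (V : MatL2 μ s r →L[ℂ] MatL2 μ s r),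
    IsMatONB E ∧ Function.Bijective V ∧ MatAdjointable V ∧ ∀ k : ℕ, F k = V (E k)

/-- The Frobenius norm of an `s × s` complex matrix. -/
def frobNorm {s : ℕ} (A : Matrix (Fin s) (Fin s) ℂ) : ℝ :=
  Real.sqrt (∑ i : Fin s, ∑ j : Fin s, ‖A i j‖ ^ 2)

end

/-! Commuting positive operators have a positive product (by the continuous functional
calculus in the C⋆-algebra of bounded operators), so `1 + T S ≥ 1` is invertible. The entries
of `matInner f g` are `L²` inner products of rows of `f` and `g`, so `matInner` is additive in
each argument and adjointability for it is preserved by sums and products. -/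

open ContinuousLinearMap

section PositiveOperators

variable {H : Type*} [NormedAddCommGroup H] [InnerProductSpace ℂ H] [CompleteSpace H]

theorem ContinuousLinearMap.IsPositive.mul_of_commute {T S : H →L[ℂ] H} (hT : T.IsPositive)
    (hS : S.IsPositive) (hc : Commute T S) : (T * S).IsPositive := by
  rw [← nonneg_iff_isPositive] at *
  exact hc.mul_nonneg hT hS

theorem ContinuousLinearMap.IsPositive.isUnit_one_add {T : H →L[ℂ] H} (hT : T.IsPositive) :
    IsUnit (1 + T) :=
  (isStrictlyPositive_one.add_nonneg ((nonneg_iff_isPositive T).mpr hT)).isUnit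

end PositiveOperators

noncomputable section MatInner

variable {G : Type*} [MeasurableSpace G] {μ : Measure G} {s r : ℕ}

def rowCLM (s r : ℕ) (i : Fin s) :
    EuclideanSpace ℂ (Fin s × Fin r) →L[ℂ] EuclideanSpace ℂ (Fin r) :=
  LinearMap.toContinuousLinearMap
    { toFun := fun x => WithLp.toLp 2 (fun n => x (i, n))
      map_add' := fun _ _ => rfl
      map_smul' := fun _ _ => rfl }

def rowL (μ : Measure G) (i : Fin s) :
    MatL2 μ s r →L[ℂ] Lp (EuclideanSpace ℂ (Fin r)) 2 μ :=
  (rowCLM s r i).compLpL 2 μ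

theorem matInner_apply_eq_inner (f g : MatL2 μ s r) (i j : Fin s) :
    matInner f g i j = inner ℂ (rowL μ j g) (rowL μ i f) := by
  rw [L2.inner_def]
  refine integral_congr_ae ?_
  filter_upwards [(rowCLM s r i).coeFn_compLpL f, (rowCLM s r j).coeFn_compLpL g]
    with x hfx hgx
  simp only [rowL, hfx, hgx, PiLp.inner_apply, RCLike.inner_apply]
  rfl

theorem matInner_add_left (f g h : MatL2 μ s r) :
    matInner (f + g) h = matInner f h + matInner g h := by
  ext i j
  simp only [matInner_apply_eq_inner, Matrix.add_apply, map_add, inner_add_right]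

theorem matInner_add_right (f g h : MatL2 μ s r) :
    matInner f (g + h) = matInner f g + matInner f h := by
  ext i j
  simp only [matInner_apply_eq_inner, Matrix.add_apply, map_add, inner_add_left]

theorem MatAdjointable.one : MatAdjointable (1 : MatL2 μ s r →L[ℂ] MatL2 μ s r) := by
  intro f g
  rw [one_def, adjoint_id]
  rfl

theorem MatAdjointable.add {U V : MatL2 μ s r →L[ℂ] MatL2 μ s r} (hU : MatAdjointable U)
    (hV : MatAdjointable V) : MatAdjointable (U + V) := by
  intro f g
  rw [add_apply, matInner_add_left, hU, hV, map_add, add_apply, matInner_add_right]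

theorem MatAdjointable.mul {U V : MatL2 μ s r →L[ℂ] MatL2 μ s r} (hU : MatAdjointable U)
    (hV : MatAdjointable V) : MatAdjointable (U * V) := by
  intro f g
  rw [mul_def, comp_apply, hU, hV, adjoint_comp, comp_apply]

end MatInner

theorem stmt_6_general {G : Type*} [MeasurableSpace G]
    (μ : MeasureTheory.Measure G) (s r : ℕ)
    (T S : MatL2 μ s r →L[ℂ] MatL2 μ s r)
    (hTpos : T.IsPositive) (hTadj : MatAdjointable T)
    (hSpos : S.IsPositive) (hSadj : MatAdjointable S)
    (hcomm : T * S = S * T)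
    (E : ℕ → MatL2 μ s r) (hE : IsMatONB E) :
    IsMatRieszBasis (fun k => (1 + T * S) (E k)) := by
  have hunit : IsUnit (1 + T * S) := (hTpos.mul_of_commute hSpos hcomm).isUnit_one_add
  exact ⟨E, 1 + T * S, hE, isUnit_iff_bijective.mp hunit,
    MatAdjointable.one.add (hTadj.mul hSadj), fun _ => rfl⟩

theorem stmt_6 {G : Type*} [MeasurableSpace G] [TopologicalSpace G] [BorelSpace G]
    [AddCommGroup G] [IsTopologicalAddGroup G] [LocallyCompactSpace G]
    [SigmaCompactSpace G] [TopologicalSpace.MetrizableSpace G]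
    (μ : MeasureTheory.Measure G) [μ.IsAddHaarMeasure] (s r : ℕ) (hs : 0 < s) (hr : 0 < r)
    (T S : MatL2 μ s r →L[ℂ] MatL2 μ s r)
    (hTpos : T.IsPositive) (hTadj : MatAdjointable T)
    (hSpos : S.IsPositive) (hSadj : MatAdjointable S)
    (hcomm : T * S = S * T)
    (E : ℕ → MatL2 μ s r) (hE : IsMatONB E) :
    IsMatRieszBasis (fun k => (1 + T * S) (E k)) :=
  stmt_6_general μ s r T S hTpos hTadj hSpos hSadj hcomm E hE
end

section
/- Let T be a bounded, linear, bijective, positive operator on L²(G, ℂ^{s×r}) that is adjointable with respect to the matrix-valued inner product, let W be a bounded, linear, positive operator on L²(G, ℂ^{s×r}) with W ∘ W = T (the positive square root T^{1/2}), and let {E_k}_{k∈ℕ} be a matrix-valued orthonormal basis for L²(G, ℂ^{s×r}). Then {T E_k}_{k∈ℕ} is a matrix-valued Riesz basis for L²(G, ℂ^{s×r}) if and only if {W E_k}_{k∈ℕ} is a matrix-valued Riesz basis for L²(G, ℂ^{s×r}). -/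
open MeasureTheory Filter
open scoped ENNReal ComplexOrder

/-!
Both families are images of the orthonormal basis `E`, so it suffices that `T` and `W` are
bijective and adjointable for the matrix-valued inner product. For `W` bijectivity follows
from `W ∘ W = T`. For a self-adjoint operator, adjointability means commuting with the pointwise
actions of the matrix units; an operator commuting with `T` commutes with its positive square
root `W = √T`, which lies in the closed algebra generated by `T`.
-/

open ContinuousLinearMap

theorem Commute.of_mul_self_eq {A : Type*} [CStarAlgebra A] [PartialOrder A] [StarOrderedRing A]
    {a b c : A} (hc : Commute c a) (hb : 0 ≤ b) (hba : b * b = a) : Commute c b := by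
  rw [← CFC.sqrt_mul_self b hb, hba]
  exact (hc.symm.cfcₙ_nnreal _).symm

section MatrixAction

variable {G : Type*} [MeasurableSpace G] {μ : Measure G} {s r : ℕ}

theorem matMulCLM_single_apply (a b : Fin s) (y : EuclideanSpace ℂ (Fin s × Fin r))
    (i : Fin s) (n : Fin r) :
    matMulCLM s r (Matrix.single a b 1) y (i, n) = if i = a then y (b, n) else 0 := by
  simp [matMulCLM, Matrix.toLpLin_apply, Matrix.mulVec, dotProduct,
    Fintype.sum_prod_type, Matrix.single_apply, ite_and, eq_comm]

theorem matInner_apply (f g : MatL2 μ s r) (a b : Fin s) :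
    matInner f g a b = inner ℂ (matSMul (Matrix.single a b 1) g) f := by
  rw [L2.inner_def]
  refine integral_congr_ae ?_
  filter_upwards [coeFn_compLp (matMulCLM s r (Matrix.single a b 1)) g] with x hx
  simp [matSMul, hx, PiLp.inner_apply, Fintype.sum_prod_type, matMulCLM_single_apply, apply_ite]

variable (μ s r) in
noncomputable def matSMulL (A : Matrix (Fin s) (Fin s) ℂ) : MatL2 μ s r →L[ℂ] MatL2 μ s r :=
  (matMulCLM s r A).compLpL 2 μ

@[simp]
theorem matSMulL_apply (A : Matrix (Fin s) (Fin s) ℂ) (f : MatL2 μ s r) :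
    matSMulL μ s r A f = matSMul A f :=
  rfl

theorem matAdjointable_iff_commute_adjoint (U : MatL2 μ s r →L[ℂ] MatL2 μ s r) :
    MatAdjointable U ↔
      ∀ a b : Fin s, Commute (matSMulL μ s r (Matrix.single a b 1)) (adjoint U) := by
  have hL : ∀ f g a b, matInner (U f) g a b =
      inner ℂ (adjoint U (matSMulL μ s r (Matrix.single a b 1) g)) f := by
    intro f g a b
    rw [matInner_apply, adjoint_inner_left, matSMulL_apply]
  have hR : ∀ f g a b, matInner f (adjoint U g) a b =
      inner ℂ (matSMulL μ s r (Matrix.single a b 1) (adjoint U g)) f := by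
    intro f g a b
    rw [matInner_apply, matSMulL_apply]
  simp only [MatAdjointable, ← Matrix.ext_iff, hL, hR, commute_iff_eq,
    ContinuousLinearMap.ext_iff]
  exact ⟨fun h a b g => ext_inner_right ℂ fun f => (h f g a b).symm,
    fun h f g a b => congrArg (inner ℂ · f) (h a b g).symm⟩

end MatrixAction

theorem stmt_10_general {G : Type*} [MeasurableSpace G]
    (μ : MeasureTheory.Measure G) (s r : ℕ)
    (T W : MatL2 μ s r →L[ℂ] MatL2 μ s r)
    (hTpos : T.IsPositive) (hTbij : Function.Bijective T) (hTadj : MatAdjointable T)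
    (hWpos : W.IsPositive) (hWT : W.comp W = T)
    (E : ℕ → MatL2 μ s r) (hE : IsMatONB E) :
    IsMatRieszBasis (fun k => T (E k)) ↔ IsMatRieszBasis (fun k => W (E k)) := by
  have hWbij : Function.Bijective W := by
    rw [← hWT, coe_comp] at hTbij
    exact ⟨hTbij.injective.of_comp, hTbij.surjective.of_comp⟩
  have hWadj : MatAdjointable W := by
    rw [matAdjointable_iff_commute_adjoint, hWpos.isSelfAdjoint.adjoint_eq]
    rw [matAdjointable_iff_commute_adjoint, hTpos.isSelfAdjoint.adjoint_eq] at hTadj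
    exact fun a b => (hTadj a b).of_mul_self_eq ((nonneg_iff_isPositive W).mpr hWpos) hWT
  exact ⟨fun _ => ⟨E, W, hE, hWbij, hWadj, fun _ => rfl⟩,
    fun _ => ⟨E, T, hE, hTbij, hTadj, fun _ => rfl⟩⟩

theorem stmt_10 {G : Type*} [MeasurableSpace G] [TopologicalSpace G] [BorelSpace G]
    [AddCommGroup G] [IsTopologicalAddGroup G] [LocallyCompactSpace G]
    [SigmaCompactSpace G] [TopologicalSpace.MetrizableSpace G]
    (μ : MeasureTheory.Measure G) [μ.IsAddHaarMeasure] (s r : ℕ) (hs : 0 < s) (hr : 0 < r)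
    (T W : MatL2 μ s r →L[ℂ] MatL2 μ s r)
    (hTpos : T.IsPositive) (hTbij : Function.Bijective T) (hTadj : MatAdjointable T)
    (hWpos : W.IsPositive) (hWT : W.comp W = T)
    (E : ℕ → MatL2 μ s r) (hE : IsMatONB E) :
    IsMatRieszBasis (fun k => T (E k)) ↔ IsMatRieszBasis (fun k => W (E k)) :=
  stmt_10_general μ s r T W hTpos hTbij hTadj hWpos hWT E hE
end

section
/- Let {E_k}_{k∈ℕ} be a matrix-valued orthonormal basis for L²(G, ℂ^{s×r}) and let U be a bounded, linear, bijective operator on L²(G, ℂ^{s×r}) that is adjointable with respect to the matrix-valued inner product. Set f_k = U E_k and g_k = (U⁻¹)* E_k = (U*)⁻¹ E_k for k ∈ ℕ. Then: (i) (U⁻¹)* is a bounded, linear, bijective operator on L²(G, ℂ^{s×r}) that is adjointable with respect to the matrix-valued inner product (hence {g_k}_{k∈ℕ} is a matrix-valued Riesz basis); and (ii) every f ∈ L²(G, ℂ^{s×r}) satisfies f = ∑_{k∈ℕ} ⟨f, g_k⟩ f_k, the series converging in the Frobenius norm. -/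
open MeasureTheory Filter
open scoped ENNReal ComplexOrder

/-!
Since `V = U⁻¹` is also adjointable, `⟨V f, E k⟩ = ⟨f, V* E k⟩`. Applying `U` to the expansion
of `V f` in the orthonormal basis, and using that an adjointable operator commutes with the left
action of matrices (the trace of the matrix-valued inner product is the scalar one), gives
`f = U (V f) = ∑ ⟨f, V* E k⟩ U E k`. The adjoint `V*` is inverted by `U*`, and the adjoint of
an adjointable operator is adjointable because `⟨g, f⟩ = ⟨f, g⟩ᴴ`.
-/

section HilbertAdjoint

variable {𝕜 E F : Type*} [RCLike 𝕜] [NormedAddCommGroup E] [InnerProductSpace 𝕜 E]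
  [CompleteSpace E] [NormedAddCommGroup F] [InnerProductSpace 𝕜 F] [CompleteSpace F]

theorem Function.LeftInverse.adjoint {U : E →L[𝕜] F} {V : F →L[𝕜] E}
    (h : Function.LeftInverse V U) :
    Function.LeftInverse (ContinuousLinearMap.adjoint U) (ContinuousLinearMap.adjoint V) := by
  have hVU : V.comp U = ContinuousLinearMap.id 𝕜 E := ContinuousLinearMap.ext h
  intro x
  simpa [ContinuousLinearMap.adjoint_comp, ContinuousLinearMap.adjoint_id] using
    congrArg (fun T => ContinuousLinearMap.adjoint T x) hVU

end HilbertAdjoint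

namespace MatL2

variable {G : Type*} [MeasurableSpace G] {μ : Measure G} {s r : ℕ}

theorem memLp_apply (f : MatL2 μ s r) (p : Fin s × Fin r) :
    MemLp (fun x => f x p) 2 μ :=
  (EuclideanSpace.proj (𝕜 := ℂ) p).comp_memLp' (Lp.memLp f)

theorem integrable_apply_mul_conj (f g : MatL2 μ s r) (p q : Fin s × Fin r) :
    Integrable (fun x => f x p * starRingEnd ℂ (g x q)) μ :=
  (memLp_apply f p).integrable_mul (memLp_apply g q).star

theorem integrable_sum_apply_mul_conj (f g : MatL2 μ s r) (i j : Fin s) :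
    Integrable (fun x => ∑ n : Fin r, f x (i, n) * starRingEnd ℂ (g x (j, n))) μ :=
  integrable_finsetSum _ fun _ _ => integrable_apply_mul_conj f g _ _

theorem conjTranspose_matInner (f g : MatL2 μ s r) :
    Matrix.conjTranspose (matInner f g) = matInner g f := by
  ext i j
  simp only [matInner, Matrix.conjTranspose_apply, Matrix.of_apply, RCLike.star_def,
    ← integral_conj, map_sum, map_mul, Complex.conj_conj, mul_comm]

theorem matMulCLM_apply (A : Matrix (Fin s) (Fin s) ℂ)
    (v : EuclideanSpace ℂ (Fin s × Fin r)) (i : Fin s) (n : Fin r) :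
    matMulCLM s r A v (i, n) = ∑ m : Fin s, A i m * v (m, n) := by
  simp only [matMulCLM, LinearMap.coe_toContinuousLinearMap', Matrix.toLpLin_apply]
  show (Matrix.mulVec _ _) (i, n) = _
  simp only [Matrix.mulVec, dotProduct, Fintype.sum_prod_type, Matrix.of_apply]
  refine Finset.sum_congr rfl fun m _ => ?_
  rw [Finset.sum_eq_single n (fun b _ hb => by simp [Ne.symm hb]) (by simp)]
  simp

theorem matInner_matSMul (A : Matrix (Fin s) (Fin s) ℂ) (f g : MatL2 μ s r) :
    matInner (matSMul A f) g = A * matInner f g := by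
  ext i j
  simp only [matInner, Matrix.of_apply, Matrix.mul_apply]
  have hpointwise : ∀ᵐ x ∂μ,
      ∑ n : Fin r, (matSMul A f : MatL2 μ s r) x (i, n) * starRingEnd ℂ (g x (j, n)) =
        ∑ m : Fin s, A i m * ∑ n : Fin r, f x (m, n) * starRingEnd ℂ (g x (j, n)) := by
    filter_upwards [(matMulCLM s r A).coeFn_compLp f] with x hx
    simp only [matSMul, hx, matMulCLM_apply, Finset.sum_mul, Finset.mul_sum, mul_assoc]
    exact Finset.sum_comm
  rw [integral_congr_ae hpointwise, integral_finsetSum _ fun m _ =>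
    (integrable_sum_apply_mul_conj f g m j).const_mul (A i m)]
  exact Finset.sum_congr rfl fun m _ => integral_const_mul _ _

theorem trace_matInner (f g : MatL2 μ s r) :
    (matInner f g).trace = inner ℂ g f := by
  have hpointwise : ∀ x, inner ℂ (g x) (f x) =
      ∑ i : Fin s, ∑ n : Fin r, f x (i, n) * starRingEnd ℂ (g x (i, n)) := fun x => by
    rw [PiLp.inner_apply, Fintype.sum_prod_type]
    rfl
  rw [L2.inner_def, funext hpointwise, integral_finsetSum _ fun i _ =>
    integrable_sum_apply_mul_conj f g i i]
  rfl

theorem ext_matInner {f f' : MatL2 μ s r} (h : ∀ g, matInner f g = matInner f' g) :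
    f = f' :=
  ext_inner_left ℂ fun g => by rw [← trace_matInner, ← trace_matInner, h]

end MatL2

namespace MatAdjointable

variable {G : Type*} [MeasurableSpace G] {μ : Measure G} {s r : ℕ}
  {U V : MatL2 μ s r →L[ℂ] MatL2 μ s r}

theorem map_matSMul (hU : MatAdjointable U) (A : Matrix (Fin s) (Fin s) ℂ)
    (f : MatL2 μ s r) : U (matSMul A f) = matSMul A (U f) :=
  MatL2.ext_matInner fun g => by
    rw [hU, MatL2.matInner_matSMul, MatL2.matInner_matSMul, ← hU]

theorem adjoint (hU : MatAdjointable U) :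
    MatAdjointable (ContinuousLinearMap.adjoint U) := fun f g => by
  rw [ContinuousLinearMap.adjoint_adjoint, ← MatL2.conjTranspose_matInner g, ← hU,
    MatL2.conjTranspose_matInner]

theorem of_inverse (hU : MatAdjointable U) (hVU : Function.LeftInverse V U)
    (hUV : Function.RightInverse V U) : MatAdjointable V := fun f g => by
  conv_lhs => rw [← hVU.adjoint g]
  rw [← hU, hUV f]

end MatAdjointable

theorem IsMatONB.tendsto_sum_matSMul_map {G : Type*} [MeasurableSpace G] {μ : Measure G}
    {s r : ℕ} {E : ℕ → MatL2 μ s r} (hE : IsMatONB E)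
    {U : MatL2 μ s r →L[ℂ] MatL2 μ s r} (hU : MatAdjointable U) (f : MatL2 μ s r) :
    Tendsto (fun N => ∑ k ∈ Finset.range N, matSMul (matInner f (E k)) (U (E k)))
      atTop (nhds (U f)) := by
  simpa only [Function.comp_def, map_sum, hU.map_matSMul] using
    (U.continuous.tendsto f).comp (hE.2 f)

theorem stmt_18_general {G : Type*} [MeasurableSpace G]
    (μ : MeasureTheory.Measure G) (s r : ℕ)
    (E : ℕ → MatL2 μ s r) (hE : IsMatONB E)
    (U V : MatL2 μ s r →L[ℂ] MatL2 μ s r)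
    (hUadj : MatAdjointable U)
    (hVU : ∀ x, V (U x) = x) (hUV : ∀ x, U (V x) = x) :
    (Function.Bijective (ContinuousLinearMap.adjoint V) ∧
        MatAdjointable (ContinuousLinearMap.adjoint V) ∧
        IsMatRieszBasis (fun k => ContinuousLinearMap.adjoint V (E k))) ∧
      ∀ f : MatL2 μ s r,
        Filter.Tendsto
          (fun N : ℕ => ∑ k ∈ Finset.range N,
            matSMul (matInner f (ContinuousLinearMap.adjoint V (E k))) (U (E k)))
          Filter.atTop (nhds f) := by
  have hVadj : MatAdjointable V := hUadj.of_inverse hVU hUV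
  have hbij : Function.Bijective (ContinuousLinearMap.adjoint V) :=
    Function.bijective_iff_has_inverse.mpr
      ⟨ContinuousLinearMap.adjoint U, Function.LeftInverse.adjoint hVU,
        Function.LeftInverse.adjoint hUV⟩
  refine ⟨⟨hbij, hVadj.adjoint, E, _, hE, hbij, hVadj.adjoint, fun _ => rfl⟩, fun f => ?_⟩
  simpa only [hVadj _ (E _), hUV f] using hE.tendsto_sum_matSMul_map hUadj (V f)

theorem stmt_18 {G : Type*} [MeasurableSpace G] [TopologicalSpace G] [BorelSpace G]
    [AddCommGroup G] [IsTopologicalAddGroup G] [LocallyCompactSpace G]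
    [SigmaCompactSpace G] [TopologicalSpace.MetrizableSpace G]
    (μ : MeasureTheory.Measure G) [μ.IsAddHaarMeasure] (s r : ℕ) (hs : 0 < s) (hr : 0 < r)
    (E : ℕ → MatL2 μ s r) (hE : IsMatONB E)
    (U V : MatL2 μ s r →L[ℂ] MatL2 μ s r)
    (hUbij : Function.Bijective U) (hUadj : MatAdjointable U)
    (hVU : ∀ x, V (U x) = x) (hUV : ∀ x, U (V x) = x) :
    (Function.Bijective (ContinuousLinearMap.adjoint V) ∧
        MatAdjointable (ContinuousLinearMap.adjoint V) ∧
        IsMatRieszBasis (fun k => ContinuousLinearMap.adjoint V (E k))) ∧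
      ∀ f : MatL2 μ s r,
        Filter.Tendsto
          (fun N : ℕ => ∑ k ∈ Finset.range N,
            matSMul (matInner f (ContinuousLinearMap.adjoint V (E k))) (U (E k)))
          Filter.atTop (nhds f) :=
  stmt_18_general μ s r E hE U V hUadj hVU hUV
end
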